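/- Let A and B be complex Banach algebras, s a fixed nonzero complex number with |s| < 1, r > 2 a real number, and θ ≥ 0. Suppose f : A³ → B satisfies f(x, 0, a) = f(0, z, a) = f(x, z, 0) = 0 for all x, z, a ∈ A and, for all λ, μ, η ∈ T¹ and all x, y, z, w, a, b ∈ A, ‖f(λ(x+y), μ(z−w), η(a+b)) + f(λ(x−y), μ(z+w), η(a−b)) − λμη(2f(x,z,a) − 2f(x,w,b) + 2f(y,z,b) − 2f(y,w,a))‖ ≤ ‖s · D₂f(x, y, z, w, a, b)‖ + θ(‖x‖^r + ‖y‖^r)(‖z‖^r + ‖w‖^r)(‖a‖^r + ‖b‖^r). Then there exists a unique ℂ-trilinear mapping H : A³ → B such that ‖f(x, z, a) − H(x, z, a)‖ ≤ (2θ/(2^r − 2)) ‖x‖^r ‖z‖^r ‖a‖^r for all x, z, a ∈ A. If, in addition, f satisfies ‖f(x_{σ(1)}, x_{σ(2)}, x_{σ(3)}) − f(x₁, x₂, x₃)‖ ≤ θ ‖x₁‖^r ‖x₂‖^r ‖x₃‖^r for all x₁, x₂, x₃ ∈ A and every permutation (σ(1), σ(2), σ(3)) of (1,2,3), and ‖f(xy,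 zw, ab) − f(x, z, a)f(y, w, b)‖ ≤ θ(‖x‖^r + ‖y‖^r)(‖z‖^r + ‖w‖^r)(‖a‖^r + ‖b‖^r) for all x, y, z, w, a, b ∈ A, then H is a permuting trihomomorphism. -/

import Mathlib

/-!
Taking `λ = μ = η = 1`, `y = x` and `w = b = 0` in the inequality gives
`‖f (2x) z a - 2 f x z a‖ ≤ 2θ ‖x‖^r ‖z‖^r ‖a‖^r`, so by Hyers' direct method
`H x z a = lim 2ⁿ f (2⁻ⁿ x) z a` exists and lies within `2θ/(2^r - 2) ‖x‖^r ‖z‖^r ‖a‖^r` of `f`.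
In the limit the `θ`-term disappears and `2ⁿ D₂ f (2⁻ⁿ x) (2⁻ⁿ y) …` becomes `D₁ H`, so
`‖D_{λ,μ,η} H‖ ≤ |s| ‖D₁ H‖`. For `λ = μ = η = 1` the left side is `D₁ H`, hence `D₁ H = 0`
because `|s| < 1`, and then `D_{λ,μ,η} H = 0`: this is Jensen's equation and `T¹`-homogeneity in
each variable, which give `ℂ`-trilinearity since every complex number is a multiple of a sum of
two unimodular ones.

A `ℂ`-trilinear `H` within `K ‖x‖^r ‖z‖^r ‖a‖^r` of `f` is recovered as
`lim_{c → 0} c⁻³ f (c x) (c z) (c a)`, the error being `O(|c|^{3r-3})`. This gives uniqueness,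
and comparing such rescalings of `f` turns the approximate symmetry and approximate
multiplicativity of `f` into exact ones for `H`; the latter needs `r > 2`, its error being
`O(|c|^{3r-6})`.
-/

/-- A mapping `f : X³ → Y` is *tri-additive* if it is additive in each variable. -/
def TriAdditive {X Y : Type*} [AddCommGroup X] [AddCommGroup Y]
    (f : X → X → X → Y) : Prop :=
  (∀ x x' z a : X, f (x + x') z a = f x z a + f x' z a) ∧
  (∀ x z z' a : X, f x (z + z') a = f x z a + f x z' a) ∧
  (∀ x z a a' : X, f x z (a + a') = f x z a + f x z a')

/-- A mapping `f : X³ → Y` is *ℂ-trilinear* if it is ℂ-linear in each variable. -/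
def CTrilinear {X Y : Type*} [AddCommGroup X] [Module ℂ X] [AddCommGroup Y] [Module ℂ Y]
    (f : X → X → X → Y) : Prop :=
  TriAdditive f ∧
  (∀ (c : ℂ) (x z a : X), f (c • x) z a = c • f x z a) ∧
  (∀ (c : ℂ) (x z a : X), f x (c • z) a = c • f x z a) ∧
  (∀ (c : ℂ) (x z a : X), f x z (c • a) = c • f x z a)

/-- `D₁f(x, y, z, w, a, b)`. -/
def D₁ {X Y : Type*} [AddCommGroup X] [Module ℂ X] [AddCommGroup Y] [Module ℂ Y]
    (f : X → X → X → Y) (x y z w a b : X) : Y :=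
  f (x + y) (z - w) (a + b) + f (x - y) (z + w) (a - b)
    - (2 : ℂ) • f x z a + (2 : ℂ) • f x w b - (2 : ℂ) • f y z b + (2 : ℂ) • f y w a

/-- `D₂f(x, y, z, w, a, b)`. -/
noncomputable def D₂ {X Y : Type*} [AddCommGroup X] [Module ℂ X] [AddCommGroup Y] [Module ℂ Y]
    (f : X → X → X → Y) (x y z w a b : X) : Y :=
  (2 : ℂ) • f ((2 : ℂ)⁻¹ • (x + y)) (z - w) (a + b)
    + (2 : ℂ) • f ((2 : ℂ)⁻¹ • (x - y)) (z + w) (a - b)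
    - (2 : ℂ) • f x z a + (2 : ℂ) • f x w b - (2 : ℂ) • f y z b + (2 : ℂ) • f y w a


/-- A ℂ-trilinear `H : A³ → B` is a *permuting trihomomorphism* if it is multiplicative
and is invariant under every permutation of its three variables. -/
def PermutingTrihomomorphism {A B : Type*} [Ring A] [Module ℂ A] [Ring B] [Module ℂ B]
    (H : A → A → A → B) : Prop :=
  CTrilinear H ∧
  (∀ x y z w a b : A, H (x * y) (z * w) (a * b) = H x z a * H y w b) ∧
  (∀ (σ : Equiv.Perm (Fin 3)) (x : Fin 3 → A),
    H (x (σ 0)) (x (σ 1)) (x (σ 2)) = H (x 0) (x 1) (x 2))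

open Filter Topology

theorem map_add_of_jensen {X Y : Type*} [AddCommGroup X] [AddCommGroup Y] [Module ℂ Y]
    {g : X → Y} (h0 : g 0 = 0) (hJ : ∀ u v, g (u + v) + g (u - v) = (2 : ℂ) • g u) (u v : X) :
    g (u + v) = g u + g v := by
  have hodd : g (v - u) = -g (u - v) := by
    have := hJ 0 (u - v)
    rwa [zero_add, zero_sub, h0, smul_zero, add_eq_zero_iff_eq_neg', neg_sub] at this
  refine smul_right_injective Y (two_ne_zero (α := ℂ)) ?_
  have h1 := hJ u v
  have h2 := hJ v u
  rw [hodd, add_comm v u] at h2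
  simp only [smul_add, ← h1, ← h2]
  rw [two_smul]
  abel

theorem Complex.exists_norm_eq_one_add_eq {c : ℂ} (hc : ‖c‖ ≤ 2) :
    ∃ l₁ l₂ : ℂ, ‖l₁‖ = 1 ∧ ‖l₂‖ = 1 ∧ l₁ + l₂ = c := by
  set t := Real.arccos (‖c‖ / 2)
  refine ⟨exp (↑(c.arg + t) * I), exp (↑(c.arg - t) * I), norm_exp_ofReal_mul_I _,
    norm_exp_ofReal_mul_I _, ?_⟩
  have hcos : (2 * Real.cos t : ℂ) = ‖c‖ := by
    rw [Real.cos_arccos (by linarith [norm_nonneg c]) (by linarith)]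
    push_cast; ring
  conv_rhs => rw [← norm_mul_exp_arg_mul_I c, ← hcos]
  rw [ofReal_cos, cos, mul_div_cancel₀ _ two_ne_zero, add_mul, ← exp_add, ← exp_add]
  push_cast
  ring_nf

theorem map_smul_of_map_unit_smul {X Y : Type*} [AddCommGroup X] [Module ℂ X] [AddCommGroup Y]
    [Module ℂ Y] {g : X → Y} (hadd : ∀ u v, g (u + v) = g u + g v)
    (hunit : ∀ l : ℂ, ‖l‖ = 1 → ∀ u, g (l • u) = l • g u) (c : ℂ) (u : X) :
    g (c • u) = c • g u := by
  let G : X →+ Y := AddMonoidHom.mk' g hadd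
  obtain ⟨n, hn⟩ := exists_nat_gt ‖c‖
  have hn0 : (n : ℂ) ≠ 0 := by
    have : (0 : ℝ) < n := (norm_nonneg c).trans_lt hn
    exact_mod_cast this.ne'
  obtain ⟨l₁, l₂, hl₁, hl₂, hsum⟩ := Complex.exists_norm_eq_one_add_eq (c := c / n) (by
    rw [norm_div, Complex.norm_natCast, div_le_iff₀ (by linarith [norm_nonneg c])]
    linarith)
  have hc : c = (n : ℂ) * (l₁ + l₂) := by rw [hsum, mul_div_cancel₀ _ hn0]
  calc g (c • u) = G (n • (l₁ • u + l₂ • u)) := by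
        rw [hc, mul_smul, Nat.cast_smul_eq_nsmul, add_smul]; rfl
    _ = c • g u := by
        rw [map_nsmul, map_add]
        simp only [G, AddMonoidHom.mk'_apply, hunit l₁ hl₁, hunit l₂ hl₂, hc, mul_smul, add_smul,
          Nat.cast_smul_eq_nsmul]

/-- `D_{λ,μ,η} f`, the left-hand side of the functional inequality. -/
def DT {X Y : Type*} [AddCommGroup X] [Module ℂ X] [AddCommGroup Y] [Module ℂ Y]
    (f : X → X → X → Y) (l m e : ℂ) (x y z w a b : X) : Y :=
  f (l • (x + y)) (m • (z - w)) (e • (a + b)) + f (l • (x - y)) (m • (z + w)) (e • (a - b))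
    - (l * m * e) • ((2 : ℂ) • f x z a - (2 : ℂ) • f x w b + (2 : ℂ) • f y z b - (2 : ℂ) • f y w a)

theorem DT_one {X Y : Type*} [AddCommGroup X] [Module ℂ X] [AddCommGroup Y] [Module ℂ Y]
    (f : X → X → X → Y) (x y z w a b : X) : DT f 1 1 1 x y z w a b = D₁ f x y z w a b := by
  simp only [DT, D₁, one_smul, one_mul]
  abel

theorem cTrilinear_of_DT_eq_zero {X Y : Type*} [AddCommGroup X] [Module ℂ X] [AddCommGroup Y]
    [Module ℂ Y] {H : X → X → X → Y} (hzero : ∀ x z a, H x 0 a = 0 ∧ H 0 z a = 0 ∧ H x z 0 = 0)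
    (hDT : ∀ l m e : ℂ, ‖l‖ = 1 → ‖m‖ = 1 → ‖e‖ = 1 → ∀ x y z w a b, DT H l m e x y z w a b = 0) :
    CTrilinear H := by
  have h₂ x a : H x 0 a = 0 := (hzero x 0 a).1
  have h₁ z a : H 0 z a = 0 := (hzero 0 z a).2.1
  have h₃ x z : H x z 0 = 0 := (hzero x z 0).2.2
  have hD₁ x y z w a b : D₁ H x y z w a b = 0 := by
    rw [← DT_one]; exact hDT 1 1 1 norm_one norm_one norm_one x y z w a b
  have hJ₁ x y z a : H (x + y) z a + H (x - y) z a = (2 : ℂ) • H x z a := by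
    simpa [D₁, h₁, h₂, h₃, sub_eq_zero] using hD₁ x y z 0 a 0
  have hJ₂ x z w a : H x (z + w) a + H x (z - w) a = (2 : ℂ) • H x z a := by
    simpa [D₁, h₁, h₂, h₃, sub_eq_zero, add_comm] using hD₁ x 0 z w a 0
  have hJ₃ x z a b : H x z (a + b) + H x z (a - b) = (2 : ℂ) • H x z a := by
    simpa [D₁, h₁, h₂, h₃, sub_eq_zero] using hD₁ x 0 z 0 a b
  have two_smul_inj : Function.Injective ((2 : ℂ) • · : Y → Y) :=
    smul_right_injective Y two_ne_zero
  have hT₁ l (hl : ‖l‖ = 1) x z a : H (l • x) z a = l • H x z a := two_smul_inj <| by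
    have := hDT l 1 1 hl norm_one norm_one x 0 z 0 a 0
    simp only [DT, add_zero, sub_zero, one_smul, mul_one, smul_zero, h₁, h₂, sub_eq_zero,
      ← two_smul ℂ] at this
    exact this.trans (smul_comm l (2 : ℂ) _)
  have hT₂ m (hm : ‖m‖ = 1) x z a : H x (m • z) a = m • H x z a := two_smul_inj <| by
    have := hDT 1 m 1 norm_one hm norm_one x 0 z 0 a 0
    simp only [DT, add_zero, sub_zero, one_smul, one_mul, mul_one, smul_zero, h₁, h₂, sub_eq_zero,
      ← two_smul ℂ] at this
    exact this.trans (smul_comm m (2 : ℂ) _)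
  have hT₃ e (he : ‖e‖ = 1) x z a : H x z (e • a) = e • H x z a := two_smul_inj <| by
    have := hDT 1 1 e norm_one norm_one he x 0 z 0 a 0
    simp only [DT, add_zero, sub_zero, one_smul, one_mul, mul_one, smul_zero, h₁, h₂, sub_eq_zero,
      ← two_smul ℂ] at this
    exact this.trans (smul_comm e (2 : ℂ) _)
  have hadd₁ z a := map_add_of_jensen (g := (H · z a)) (h₁ z a) (hJ₁ · · z a)
  have hadd₂ x a := map_add_of_jensen (g := (H x · a)) (h₂ x a) (hJ₂ x · · a)
  have hadd₃ x z := map_add_of_jensen (g := H x z) (h₃ x z) (hJ₃ x z · ·)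
  exact ⟨⟨fun x x' z a => hadd₁ z a x x', fun x z z' a => hadd₂ x a z z',
      fun x z a a' => hadd₃ x z a a'⟩,
    fun c x z a => map_smul_of_map_unit_smul (g := (H · z a)) (hadd₁ z a) (hT₁ · · · z a) c x,
    fun c x z a => map_smul_of_map_unit_smul (g := (H x · a)) (hadd₂ x a) (hT₂ · · x · a) c z,
    fun c x z a => map_smul_of_map_unit_smul (g := H x z) (hadd₃ x z) (hT₃ · · x z ·) c a⟩

section Doubling

variable (𝕜 : Type*) {X Y : Type*} [RCLike 𝕜] [NormedAddCommGroup X] [NormedSpace 𝕜 X]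
  [NormedAddCommGroup Y] [NormedSpace 𝕜 Y]

def doublingSeq (p : X → Y) (x : X) (n : ℕ) : Y := (2 : 𝕜) ^ n • p (((2 : 𝕜) ^ n)⁻¹ • x)

noncomputable def doublingLimit (p : X → Y) (x : X) : Y := limUnder atTop (doublingSeq 𝕜 p x)

variable {𝕜}

theorem norm_inv_two_pow_smul_rpow (r : ℝ) (n : ℕ) (x : X) :
    ‖((2 : 𝕜) ^ n)⁻¹ • x‖ ^ r = (((2 : ℝ) ^ r) ^ n)⁻¹ * ‖x‖ ^ r := by
  rw [norm_smul, norm_inv, norm_pow, RCLike.norm_two, Real.mul_rpow (by positivity) (norm_nonneg x),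
    Real.inv_rpow (by positivity), ← Real.rpow_pow_comm zero_le_two]

variable {p : X → Y} {c r : ℝ}

theorem dist_doublingSeq_succ_le (hp : ∀ x, ‖p ((2 : 𝕜) • x) - (2 : 𝕜) • p x‖ ≤ c * ‖x‖ ^ r)
    (x : X) (n : ℕ) :
    dist (doublingSeq 𝕜 p x n) (doublingSeq 𝕜 p x (n + 1))
      ≤ c * ‖x‖ ^ r / 2 ^ r * (2 / 2 ^ r) ^ n := by
  set y : X := ((2 : 𝕜) ^ (n + 1))⁻¹ • x
  have hy : ((2 : 𝕜) ^ n)⁻¹ • x = (2 : 𝕜) • y := by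
    rw [smul_smul, pow_succ, mul_inv, mul_left_comm, mul_inv_cancel₀ two_ne_zero, mul_one]
  have hseq : doublingSeq 𝕜 p x n - doublingSeq 𝕜 p x (n + 1)
      = (2 : 𝕜) ^ n • (p ((2 : 𝕜) • y) - (2 : 𝕜) • p y) := by
    rw [← hy, smul_sub, smul_smul, ← pow_succ]
    rfl
  rw [dist_eq_norm, hseq, norm_smul, norm_pow, RCLike.norm_two]
  calc (2 : ℝ) ^ n * ‖p ((2 : 𝕜) • y) - (2 : 𝕜) • p y‖
      ≤ 2 ^ n * (c * ((((2 : ℝ) ^ r) ^ (n + 1))⁻¹ * ‖x‖ ^ r)) := by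
        rw [← norm_inv_two_pow_smul_rpow (𝕜 := 𝕜)]
        exact mul_le_mul_of_nonneg_left (hp y) (by positivity)
    _ = c * ‖x‖ ^ r / 2 ^ r * (2 / 2 ^ r) ^ n := by
        rw [pow_succ, div_pow]
        field_simp

theorem doublingLimit_eq_zero {x : X} (h : ∀ n, doublingSeq 𝕜 p x n = 0) :
    doublingLimit 𝕜 p x = 0 := by
  rw [doublingLimit, funext h]
  exact tendsto_const_nhds.limUnder_eq

theorem two_lt_two_rpow (hr : 1 < r) : (2 : ℝ) < 2 ^ r := by
  simpa using Real.rpow_lt_rpow_of_exponent_lt one_lt_two hr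

variable [CompleteSpace Y]

theorem tendsto_doublingLimit (hp : ∀ x, ‖p ((2 : 𝕜) • x) - (2 : 𝕜) • p x‖ ≤ c * ‖x‖ ^ r)
    (hr : 1 < r) (x : X) : Tendsto (doublingSeq 𝕜 p x) atTop (𝓝 (doublingLimit 𝕜 p x)) :=
  (cauchySeq_of_le_geometric _ _ ((div_lt_one (by positivity)).2 (two_lt_two_rpow hr))
    (dist_doublingSeq_succ_le hp x)).tendsto_limUnder

theorem norm_sub_doublingLimit_le (hp : ∀ x, ‖p ((2 : 𝕜) • x) - (2 : 𝕜) • p x‖ ≤ c * ‖x‖ ^ r)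
    (hr : 1 < r) (x : X) : ‖p x - doublingLimit 𝕜 p x‖ ≤ c / (2 ^ r - 2) * ‖x‖ ^ r := by
  have h := dist_le_of_le_geometric_of_tendsto₀ _ _
    ((div_lt_one (by positivity)).2 (two_lt_two_rpow hr))
    (dist_doublingSeq_succ_le hp x) (tendsto_doublingLimit hp hr x)
  rw [dist_eq_norm] at h
  convert h using 1
  · simp [doublingSeq]
  · have := two_lt_two_rpow hr
    field_simp

end Doubling

section Stability

variable {X Y : Type*} [NormedAddCommGroup X] [NormedSpace ℂ X] [NormedAddCommGroup Y]
  [NormedSpace ℂ Y]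

def DTStable (s : ℂ) (r θ : ℝ) (f : X → X → X → Y) : Prop :=
  ∀ l m e : ℂ, ‖l‖ = 1 → ‖m‖ = 1 → ‖e‖ = 1 → ∀ x y z w a b : X,
    ‖DT f l m e x y z w a b‖
      ≤ ‖s • D₂ f x y z w a b‖ + θ * (‖x‖ ^ r + ‖y‖ ^ r) * (‖z‖ ^ r + ‖w‖ ^ r) * (‖a‖ ^ r + ‖b‖ ^ r)

noncomputable def hyersLimit (f : X → X → X → Y) (x z a : X) : Y := doublingLimit ℂ (f · z a) x

variable {f : X → X → X → Y} {s : ℂ} {r θ : ℝ}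

theorem norm_apply_two_smul_sub_le (hzero : ∀ x z a, f x 0 a = 0 ∧ f 0 z a = 0 ∧ f x z 0 = 0)
    (hf : DTStable s r θ f) (hr : 0 < r) (z a x : X) :
    ‖f ((2 : ℂ) • x) z a - (2 : ℂ) • f x z a‖ ≤ 2 * θ * ‖z‖ ^ r * ‖a‖ ^ r * ‖x‖ ^ r := by
  have h₂ x a : f x 0 a = 0 := (hzero x 0 a).1
  have h₁ z a : f 0 z a = 0 := (hzero 0 z a).2.1
  have h₃ x z : f x z 0 = 0 := (hzero x z 0).2.2
  have hD₂ : D₂ f x x z 0 a 0 = 0 := by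
    simp [D₂, ← two_smul ℂ x, h₁, h₂, h₃]
  have := hf 1 1 1 norm_one norm_one norm_one x x z 0 a 0
  simp only [DT, ← two_smul ℂ x, one_smul, one_mul, sub_zero, add_zero, sub_self, smul_zero, h₁,
    h₂, h₃, hD₂, norm_zero, Real.zero_rpow hr.ne', zero_add] at this
  linarith

theorem DT_doublingSeq (l m e : ℂ) (n : ℕ) (x y z w a b : X) :
    DT (fun x z a => doublingSeq ℂ (f · z a) x n) l m e x y z w a b
      = (2 : ℂ) ^ n • DT f l m e (((2 : ℂ) ^ n)⁻¹ • x) (((2 : ℂ) ^ n)⁻¹ • y) z w a b := by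
  simp only [DT, doublingSeq, smul_add, smul_sub, smul_comm _ l]
  module

theorem two_pow_smul_D₂ (n : ℕ) (x y z w a b : X) :
    (2 : ℂ) ^ n • D₂ f (((2 : ℂ) ^ n)⁻¹ • x) (((2 : ℂ) ^ n)⁻¹ • y) z w a b
      = doublingSeq ℂ (f · (z - w) (a + b)) (x + y) (n + 1)
        + doublingSeq ℂ (f · (z + w) (a - b)) (x - y) (n + 1)
        - (2 : ℂ) • doublingSeq ℂ (f · z a) x n + (2 : ℂ) • doublingSeq ℂ (f · w b) x n
        - (2 : ℂ) • doublingSeq ℂ (f · z b) y n + (2 : ℂ) • doublingSeq ℂ (f · w a) y n := by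
  have hsum : (2 : ℂ)⁻¹ • (((2 : ℂ) ^ n)⁻¹ • x + ((2 : ℂ) ^ n)⁻¹ • y)
      = ((2 : ℂ) ^ (n + 1))⁻¹ • (x + y) := by
    rw [← smul_add, smul_smul, pow_succ, mul_inv, mul_comm]
  have hdiff : (2 : ℂ)⁻¹ • (((2 : ℂ) ^ n)⁻¹ • x - ((2 : ℂ) ^ n)⁻¹ • y)
      = ((2 : ℂ) ^ (n + 1))⁻¹ • (x - y) := by
    rw [← smul_sub, smul_smul, pow_succ, mul_inv, mul_comm]
  rw [D₂, hsum, hdiff]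
  simp only [doublingSeq]
  module

theorem tendsto_DT {ι : Type*} {L : Filter ι} {F : ι → X → X → X → Y} {H : X → X → X → Y}
    (hF : ∀ x z a, Tendsto (F · x z a) L (𝓝 (H x z a))) (l m e : ℂ) (x y z w a b : X) :
    Tendsto (fun i => DT (F i) l m e x y z w a b) L (𝓝 (DT H l m e x y z w a b)) :=
  ((hF _ _ _).add (hF _ _ _)).sub <|
    ((((((hF _ _ _).const_smul _).sub ((hF _ _ _).const_smul _)).add
      ((hF _ _ _).const_smul _)).sub ((hF _ _ _).const_smul _))).const_smul _

theorem hyersLimit_eq_zero (hzero : ∀ x z a, f x 0 a = 0 ∧ f 0 z a = 0 ∧ f x z 0 = 0)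
    (x z a : X) :
    hyersLimit f x 0 a = 0 ∧ hyersLimit f 0 z a = 0 ∧ hyersLimit f x z 0 = 0 :=
  ⟨doublingLimit_eq_zero fun n => by simp [doublingSeq, (hzero _ 0 a).1],
    doublingLimit_eq_zero fun n => by simp [doublingSeq, (hzero 0 z a).2.1],
    doublingLimit_eq_zero fun n => by simp [doublingSeq, (hzero _ z 0).2.2]⟩

variable [CompleteSpace Y]

theorem norm_DT_hyersLimit_le (hzero : ∀ x z a, f x 0 a = 0 ∧ f 0 z a = 0 ∧ f x z 0 = 0)
    (hf : DTStable s r θ f) (hr : 1 < r) {l m e : ℂ} (hl : ‖l‖ = 1) (hm : ‖m‖ = 1)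
    (he : ‖e‖ = 1) (x y z w a b : X) :
    ‖DT (hyersLimit f) l m e x y z w a b‖ ≤ ‖s‖ * ‖D₁ (hyersLimit f) x y z w a b‖ := by
  set F : ℕ → X → X → X → Y := fun n x z a => doublingSeq ℂ (f · z a) x n
  have hF x z a : Tendsto (F · x z a) atTop (𝓝 (hyersLimit f x z a)) :=
    tendsto_doublingLimit (norm_apply_two_smul_sub_le hzero hf (by linarith) z a) hr x
  have hFsucc x z a : Tendsto (fun n => F (n + 1) x z a) atTop (𝓝 (hyersLimit f x z a)) :=
    (hF x z a).comp (tendsto_add_atTop_nat 1)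
  set K := θ * (‖x‖ ^ r + ‖y‖ ^ r) * (‖z‖ ^ r + ‖w‖ ^ r) * (‖a‖ ^ r + ‖b‖ ^ r)
  have hstep n : ‖DT (F n) l m e x y z w a b‖
      ≤ ‖s‖ * ‖(2 : ℂ) ^ n • D₂ f (((2 : ℂ) ^ n)⁻¹ • x) (((2 : ℂ) ^ n)⁻¹ • y) z w a b‖
        + K * (2 / 2 ^ r) ^ n := by
    calc ‖DT (F n) l m e x y z w a b‖
        = 2 ^ n * ‖DT f l m e (((2 : ℂ) ^ n)⁻¹ • x) (((2 : ℂ) ^ n)⁻¹ • y) z w a b‖ := by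
          rw [DT_doublingSeq, norm_smul, norm_pow, RCLike.norm_two]
      _ ≤ 2 ^ n * (‖s • D₂ f (((2 : ℂ) ^ n)⁻¹ • x) (((2 : ℂ) ^ n)⁻¹ • y) z w a b‖
            + θ * (‖((2 : ℂ) ^ n)⁻¹ • x‖ ^ r + ‖((2 : ℂ) ^ n)⁻¹ • y‖ ^ r) * (‖z‖ ^ r + ‖w‖ ^ r)
              * (‖a‖ ^ r + ‖b‖ ^ r)) :=
          mul_le_mul_of_nonneg_left (hf l m e hl hm he _ _ z w a b) (by positivity)
      _ = _ := by
          rw [norm_inv_two_pow_smul_rpow, norm_inv_two_pow_smul_rpow, norm_smul s, norm_smul,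
            norm_pow, RCLike.norm_two, div_pow]
          field_simp
          ring
  have hD₁ : Tendsto
      (fun n : ℕ => (2 : ℂ) ^ n • D₂ f (((2 : ℂ) ^ n)⁻¹ • x) (((2 : ℂ) ^ n)⁻¹ • y) z w a b)
      atTop (𝓝 (D₁ (hyersLimit f) x y z w a b)) := by
    simp only [two_pow_smul_D₂]
    exact (((((hFsucc _ _ _).add (hFsucc _ _ _)).sub ((hF _ _ _).const_smul _)).add
      ((hF _ _ _).const_smul _)).sub ((hF _ _ _).const_smul _)).add ((hF _ _ _).const_smul _)
  have hq := tendsto_pow_atTop_nhds_zero_of_lt_one (by positivity)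
    ((div_lt_one (by positivity)).2 (two_lt_two_rpow hr))
  simpa using le_of_tendsto_of_tendsto' (tendsto_DT hF l m e x y z w a b).norm
    ((hD₁.norm.const_mul ‖s‖).add (hq.const_mul K)) hstep

theorem DT_hyersLimit_eq_zero (hzero : ∀ x z a, f x 0 a = 0 ∧ f 0 z a = 0 ∧ f x z 0 = 0)
    (hf : DTStable s r θ f) (hs : ‖s‖ < 1) (hr : 1 < r) {l m e : ℂ} (hl : ‖l‖ = 1)
    (hm : ‖m‖ = 1) (he : ‖e‖ = 1) (x y z w a b : X) :
    DT (hyersLimit f) l m e x y z w a b = 0 := by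
  have hD₁ x y z w a b : D₁ (hyersLimit f) x y z w a b = 0 := by
    have := norm_DT_hyersLimit_le hzero hf hr norm_one norm_one norm_one x y z w a b
    rw [DT_one] at this
    exact norm_le_zero_iff.1 (by nlinarith [norm_nonneg (D₁ (hyersLimit f) x y z w a b)])
  simpa [hD₁] using norm_DT_hyersLimit_le hzero hf hr hl hm he x y z w a b

theorem cTrilinear_hyersLimit (hzero : ∀ x z a, f x 0 a = 0 ∧ f 0 z a = 0 ∧ f x z 0 = 0)
    (hf : DTStable s r θ f) (hs : ‖s‖ < 1) (hr : 1 < r) : CTrilinear (hyersLimit f) :=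
  cTrilinear_of_DT_eq_zero (hyersLimit_eq_zero hzero) fun _ _ _ hl hm he =>
    DT_hyersLimit_eq_zero hzero hf hs hr hl hm he

theorem norm_sub_hyersLimit_le (hzero : ∀ x z a, f x 0 a = 0 ∧ f 0 z a = 0 ∧ f x z 0 = 0)
    (hf : DTStable s r θ f) (hr : 1 < r) (x z a : X) :
    ‖f x z a - hyersLimit f x z a‖ ≤ 2 * θ / (2 ^ r - 2) * (‖x‖ ^ r * ‖z‖ ^ r * ‖a‖ ^ r) := by
  have := norm_sub_doublingLimit_le (p := (f · z a))
    (norm_apply_two_smul_sub_le hzero hf (by linarith) z a) hr x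
  exact this.trans_eq (by ring)

end Stability

theorem eq_of_tendsto_of_norm_sub_le {ι E : Type*} [NormedAddCommGroup E] {L : Filter ι} [L.NeBot]
    {u v : ι → E} {ρ : ι → ℝ} {a b : E} (hu : Tendsto u L (𝓝 a)) (hv : Tendsto v L (𝓝 b))
    (h : ∀ᶠ i in L, ‖u i - v i‖ ≤ ρ i) (hρ : Tendsto ρ L (𝓝 0)) : a = b :=
  sub_eq_zero.1 <| tendsto_nhds_unique (hu.sub hv) (squeeze_zero_norm' h hρ)

theorem tendsto_norm_rpow_nhds_zero {E : Type*} [NormedAddCommGroup E] {β : ℝ} (hβ : 0 < β) :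
    Tendsto (fun c : E => ‖c‖ ^ β) (𝓝 0) (𝓝 0) := by
  have h := (Real.continuousAt_rpow_const 0 β (Or.inr hβ.le)).tendsto.comp
    (tendsto_norm_zero (E := E))
  rwa [Real.zero_rpow hβ.ne'] at h

theorem CTrilinear.map_smul_smul_smul {X Y : Type*} [AddCommGroup X] [Module ℂ X] [AddCommGroup Y]
    [Module ℂ Y] {H : X → X → X → Y} (hH : CTrilinear H) (c : ℂ) (x z a : X) :
    H (c • x) (c • z) (c • a) = c ^ 3 • H x z a := by
  rw [hH.2.1, hH.2.2.1, hH.2.2.2, smul_smul, smul_smul]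
  ring_nf

section Rescaling

variable {X Y : Type*} [NormedAddCommGroup X] [NormedSpace ℂ X] [NormedAddCommGroup Y]
  [NormedSpace ℂ Y] {f H : X → X → X → Y} {K r θ : ℝ}

theorem norm_smul_rpow (c : ℂ) (x : X) : ‖c • x‖ ^ r = ‖c‖ ^ r * ‖x‖ ^ r := by
  rw [norm_smul, Real.mul_rpow (norm_nonneg c) (norm_nonneg x)]

theorem tendsto_rescale_of_norm_sub_le (hH : CTrilinear H)
    (hb : ∀ x z a, ‖f x z a - H x z a‖ ≤ K * (‖x‖ ^ r * ‖z‖ ^ r * ‖a‖ ^ r)) (hr : 1 < r)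
    (x z a : X) :
    Tendsto (fun c : ℂ => (c ^ 3)⁻¹ • f (c • x) (c • z) (c • a)) (𝓝[≠] 0) (𝓝 (H x z a)) := by
  refine tendsto_iff_norm_sub_tendsto_zero.2 <| squeeze_zero_norm' (a := fun c =>
    K * (‖x‖ ^ r * ‖z‖ ^ r * ‖a‖ ^ r) * (‖c‖ ^ (r - 1)) ^ 3) ?_ ?_
  · filter_upwards [self_mem_nhdsWithin] with c (hc : c ≠ 0)
    have hH' : H x z a = (c ^ 3)⁻¹ • H (c • x) (c • z) (c • a) := by
      rw [hH.map_smul_smul_smul, inv_smul_smul₀ (pow_ne_zero 3 hc)]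
    rw [hH', ← smul_sub, norm_norm, norm_smul, norm_inv, norm_pow]
    calc (‖c‖ ^ 3)⁻¹ * ‖f (c • x) (c • z) (c • a) - H (c • x) (c • z) (c • a)‖
        ≤ (‖c‖ ^ 3)⁻¹ * (K * (‖c • x‖ ^ r * ‖c • z‖ ^ r * ‖c • a‖ ^ r)) :=
          mul_le_mul_of_nonneg_left (hb _ _ _) (by positivity)
      _ = _ := by
          rw [norm_smul_rpow, norm_smul_rpow, norm_smul_rpow,
            Real.rpow_sub_one (norm_ne_zero_iff.2 hc)]
          field_simp
  · simpa using (((tendsto_norm_rpow_nhds_zero (by linarith)).pow 3).const_mul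
      (K * (‖x‖ ^ r * ‖z‖ ^ r * ‖a‖ ^ r))).mono_left nhdsWithin_le_nhds

theorem CTrilinear.eq_of_norm_sub_le {H' : X → X → X → Y} (hH : CTrilinear H)
    (hH' : CTrilinear H') (hb : ∀ x z a, ‖f x z a - H x z a‖ ≤ K * (‖x‖ ^ r * ‖z‖ ^ r * ‖a‖ ^ r))
    (hb' : ∀ x z a, ‖f x z a - H' x z a‖ ≤ K * (‖x‖ ^ r * ‖z‖ ^ r * ‖a‖ ^ r)) (hr : 1 < r) :
    H = H' :=
  funext₃ fun x z a => tendsto_nhds_unique (tendsto_rescale_of_norm_sub_le hH hb hr x z a)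
    (tendsto_rescale_of_norm_sub_le hH' hb' hr x z a)

theorem map_perm_eq_of_norm_sub_le (hH : CTrilinear H)
    (hb : ∀ x z a, ‖f x z a - H x z a‖ ≤ K * (‖x‖ ^ r * ‖z‖ ^ r * ‖a‖ ^ r)) (hr : 1 < r)
    (hperm : ∀ (σ : Equiv.Perm (Fin 3)) (x : Fin 3 → X),
      ‖f (x (σ 0)) (x (σ 1)) (x (σ 2)) - f (x 0) (x 1) (x 2)‖
        ≤ θ * ‖x 0‖ ^ r * ‖x 1‖ ^ r * ‖x 2‖ ^ r)
    (σ : Equiv.Perm (Fin 3)) (x : Fin 3 → X) :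
    H (x (σ 0)) (x (σ 1)) (x (σ 2)) = H (x 0) (x 1) (x 2) := by
  refine eq_of_tendsto_of_norm_sub_le (tendsto_rescale_of_norm_sub_le hH hb hr _ _ _)
    (tendsto_rescale_of_norm_sub_le hH hb hr _ _ _) (ρ := fun c =>
      θ * ‖x 0‖ ^ r * ‖x 1‖ ^ r * ‖x 2‖ ^ r * (‖c‖ ^ (r - 1)) ^ 3) ?_ ?_
  · filter_upwards [self_mem_nhdsWithin] with c (hc : c ≠ 0)
    rw [← smul_sub, norm_smul, norm_inv, norm_pow]
    calc (‖c‖ ^ 3)⁻¹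
          * ‖f (c • x (σ 0)) (c • x (σ 1)) (c • x (σ 2)) - f (c • x 0) (c • x 1) (c • x 2)‖
        ≤ (‖c‖ ^ 3)⁻¹ * (θ * ‖c • x 0‖ ^ r * ‖c • x 1‖ ^ r * ‖c • x 2‖ ^ r) :=
          mul_le_mul_of_nonneg_left (hperm σ (c • x)) (by positivity)
      _ = _ := by
          rw [norm_smul_rpow, norm_smul_rpow, norm_smul_rpow,
            Real.rpow_sub_one (norm_ne_zero_iff.2 hc)]
          field_simp
  · simpa using (((tendsto_norm_rpow_nhds_zero (by linarith)).pow 3).const_mul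
      (θ * ‖x 0‖ ^ r * ‖x 1‖ ^ r * ‖x 2‖ ^ r)).mono_left nhdsWithin_le_nhds

end Rescaling

section Multiplicativity

variable {X Y : Type*} [NormedRing X] [NormedAlgebra ℂ X] [NormedRing Y] [NormedAlgebra ℂ Y]
  {f H : X → X → X → Y} {K r θ : ℝ}

theorem map_mul_eq_of_norm_sub_le (hH : CTrilinear H)
    (hb : ∀ x z a, ‖f x z a - H x z a‖ ≤ K * (‖x‖ ^ r * ‖z‖ ^ r * ‖a‖ ^ r)) (hr : 2 < r)
    (hmul : ∀ x y z w a b : X, ‖f (x * y) (z * w) (a * b) - f x z a * f y w b‖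
      ≤ θ * (‖x‖ ^ r + ‖y‖ ^ r) * (‖z‖ ^ r + ‖w‖ ^ r) * (‖a‖ ^ r + ‖b‖ ^ r))
    (x y z w a b : X) : H (x * y) (z * w) (a * b) = H x z a * H y w b := by
  have hsq : Tendsto (fun c : ℂ => c ^ 2) (𝓝[≠] 0) (𝓝[≠] 0) :=
    tendsto_nhdsWithin_of_tendsto_nhds_of_eventually_within _
      (((continuous_pow 2).tendsto' 0 0 (zero_pow two_ne_zero)).mono_left nhdsWithin_le_nhds)
      (eventually_mem_nhdsWithin.mono fun c hc => pow_ne_zero 2 hc)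
  have hprod := (tendsto_rescale_of_norm_sub_le hH hb (by linarith) x z a).mul
    (tendsto_rescale_of_norm_sub_le hH hb (by linarith) y w b)
  refine eq_of_tendsto_of_norm_sub_le
    ((tendsto_rescale_of_norm_sub_le hH hb (by linarith) _ _ _).comp hsq) hprod (ρ := fun c =>
      θ * (‖x‖ ^ r + ‖y‖ ^ r) * (‖z‖ ^ r + ‖w‖ ^ r) * (‖a‖ ^ r + ‖b‖ ^ r) * (‖c‖ ^ (r - 2)) ^ 3)
    ?_ ?_
  · filter_upwards [self_mem_nhdsWithin] with c (hc : c ≠ 0)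
    have hsmul (u v : X) : c ^ 2 • (u * v) = (c • u) * (c • v) := by
      rw [smul_mul_smul_comm, pow_two]
    have hinv : (c ^ 3)⁻¹ * (c ^ 3)⁻¹ = ((c ^ 2) ^ 3)⁻¹ := by ring
    rw [Function.comp_apply, hsmul, hsmul, hsmul, smul_mul_smul_comm (c ^ 3)⁻¹, hinv, ← smul_sub,
      norm_smul, norm_inv, norm_pow, norm_pow]
    calc ((‖c‖ ^ 2) ^ 3)⁻¹ * ‖f (c • x * c • y) (c • z * c • w) (c • a * c • b)
          - f (c • x) (c • z) (c • a) * f (c • y) (c • w) (c • b)‖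
        ≤ ((‖c‖ ^ 2) ^ 3)⁻¹ * (θ * (‖c • x‖ ^ r + ‖c • y‖ ^ r) * (‖c • z‖ ^ r + ‖c • w‖ ^ r)
            * (‖c • a‖ ^ r + ‖c • b‖ ^ r)) :=
          mul_le_mul_of_nonneg_left (hmul _ _ _ _ _ _) (by positivity)
      _ = _ := by
          simp only [norm_smul_rpow]
          rw [Real.rpow_sub (norm_pos_iff.2 hc), Real.rpow_two]
          field_simp
  · simpa using (((tendsto_norm_rpow_nhds_zero (by linarith)).pow 3).const_mul
      (θ * (‖x‖ ^ r + ‖y‖ ^ r) * (‖z‖ ^ r + ‖w‖ ^ r) * (‖a‖ ^ r + ‖b‖ ^ r))).mono_left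
        nhdsWithin_le_nhds

end Multiplicativity

variable {A B : Type*} [NormedRing A] [NormedAlgebra ℂ A] [CompleteSpace A]
  [NormedRing B] [NormedAlgebra ℂ B] [CompleteSpace B]

theorem stmt_15_general (s : ℂ) (hs1 : ‖s‖ < 1) (r θ : ℝ) (hr : 2 < r)
    (f : A → A → A → B)
    (hzero : ∀ x z a : A, f x 0 a = 0 ∧ f 0 z a = 0 ∧ f x z 0 = 0)
    (hineq : ∀ l m e : ℂ, ‖l‖ = 1 → ‖m‖ = 1 → ‖e‖ = 1 → ∀ x y z w a b : A,
      ‖f (l • (x + y)) (m • (z - w)) (e • (a + b))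
          + f (l • (x - y)) (m • (z + w)) (e • (a - b))
          - (l * m * e) • ((2 : ℂ) • f x z a - (2 : ℂ) • f x w b
              + (2 : ℂ) • f y z b - (2 : ℂ) • f y w a)‖
        ≤ ‖s • D₂ f x y z w a b‖ + θ * (‖x‖ ^ r + ‖y‖ ^ r) * (‖z‖ ^ r + ‖w‖ ^ r) * (‖a‖ ^ r + ‖b‖ ^ r)) :
    (∃! H : A → A → A → B, CTrilinear H ∧
      ∀ x z a : A, ‖f x z a - H x z a‖ ≤ 2 * θ / ((2 : ℝ) ^ r - 2) * (‖x‖ ^ r * ‖z‖ ^ r * ‖a‖ ^ r)) ∧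
    ((∀ (σ : Equiv.Perm (Fin 3)) (x : Fin 3 → A),
      ‖f (x (σ 0)) (x (σ 1)) (x (σ 2)) - f (x 0) (x 1) (x 2)‖
        ≤ θ * ‖x 0‖ ^ r * ‖x 1‖ ^ r * ‖x 2‖ ^ r) →
     (∀ x y z w a b : A,
      ‖f (x * y) (z * w) (a * b) - f x z a * f y w b‖
        ≤ θ * (‖x‖ ^ r + ‖y‖ ^ r) * (‖z‖ ^ r + ‖w‖ ^ r) * (‖a‖ ^ r + ‖b‖ ^ r)) →
     ∀ H : A → A → A → B,
       (CTrilinear H ∧ ∀ x z a : A, ‖f x z a - H x z a‖ ≤ 2 * θ / ((2 : ℝ) ^ r - 2) * (‖x‖ ^ r * ‖z‖ ^ r * ‖a‖ ^ r)) →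
       PermutingTrihomomorphism H) := by
  have hr₁ : 1 < r := by linarith
  have hH := cTrilinear_hyersLimit hzero hineq hs1 hr₁
  have hb := norm_sub_hyersLimit_le hzero hineq hr₁
  refine ⟨⟨hyersLimit f, ⟨hH, hb⟩, fun H' ⟨hH', hb'⟩ => (hH.eq_of_norm_sub_le hH' hb hb' hr₁).symm⟩,
    ?_⟩
  rintro hperm hmul H ⟨hH, hb⟩
  exact ⟨hH, map_mul_eq_of_norm_sub_le hH hb hr hmul, map_perm_eq_of_norm_sub_le hH hb hr₁ hperm⟩

theorem stmt_15 (s : ℂ) (hs0 : s ≠ 0) (hs1 : ‖s‖ < 1) (r θ : ℝ) (hr : 2 < r) (hθ : 0 ≤ θ)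
    (f : A → A → A → B)
    (hzero : ∀ x z a : A, f x 0 a = 0 ∧ f 0 z a = 0 ∧ f x z 0 = 0)
    (hineq : ∀ l m e : ℂ, ‖l‖ = 1 → ‖m‖ = 1 → ‖e‖ = 1 → ∀ x y z w a b : A,
      ‖f (l • (x + y)) (m • (z - w)) (e • (a + b))
          + f (l • (x - y)) (m • (z + w)) (e • (a - b))
          - (l * m * e) • ((2 : ℂ) • f x z a - (2 : ℂ) • f x w b
              + (2 : ℂ) • f y z b - (2 : ℂ) • f y w a)‖
        ≤ ‖s • D₂ f x y z w a b‖ + θ * (‖x‖ ^ r + ‖y‖ ^ r) * (‖z‖ ^ r + ‖w‖ ^ r) * (‖a‖ ^ r + ‖b‖ ^ r)) :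
    (∃! H : A → A → A → B, CTrilinear H ∧
      ∀ x z a : A, ‖f x z a - H x z a‖ ≤ 2 * θ / ((2 : ℝ) ^ r - 2) * (‖x‖ ^ r * ‖z‖ ^ r * ‖a‖ ^ r)) ∧
    ((∀ (σ : Equiv.Perm (Fin 3)) (x : Fin 3 → A),
      ‖f (x (σ 0)) (x (σ 1)) (x (σ 2)) - f (x 0) (x 1) (x 2)‖
        ≤ θ * ‖x 0‖ ^ r * ‖x 1‖ ^ r * ‖x 2‖ ^ r) →
     (∀ x y z w a b : A,
      ‖f (x * y) (z * w) (a * b) - f x z a * f y w b‖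
        ≤ θ * (‖x‖ ^ r + ‖y‖ ^ r) * (‖z‖ ^ r + ‖w‖ ^ r) * (‖a‖ ^ r + ‖b‖ ^ r)) →
     ∀ H : A → A → A → B,
       (CTrilinear H ∧ ∀ x z a : A, ‖f x z a - H x z a‖ ≤ 2 * θ / ((2 : ℝ) ^ r - 2) * (‖x‖ ^ r * ‖z‖ ^ r * ‖a‖ ^ r)) →
       PermutingTrihomomorphism H) :=
  stmt_15_general s hs1 r θ hr f hzero hineq
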